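/- arXiv:2003.00362 — 4 statements merged into one kernel-verified Lean document; each statement's English description precedes it below -/
import Mathlib

section
/- Let Z = (Z_1,…,Z_d) be a vector of positive reals, C the edge weight matrix of a DAG, and B its Kleene star. Then X := Z ⊙ B is the unique solution of the max-linear structural equation system X = X ⊙ C ∨ Z. -/
/-!
Write `P n = ⋁_{k<n} Z ⊙ C^{⊙k}`, so that `Z ⊙ B = P d`. One application of the map
`X ↦ X ⊙ C ∨ Z` sends `P n` to `P (n+1)`, and `P (d+1) = P d` because `C^{⊙d} = 0`;
hence `Z ⊙ B` is a fixed point. Conversely, unfolding the equation `n` times shows that any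
solution satisfies `X = X ⊙ C^{⊙n} ∨ P n`, which for `n = d` reads `X = P d`.
-/

open Matrix Finset MeasureTheory ProbabilityTheory Filter

noncomputable section

/-- Max-times (tropical) matrix product: `(F ⊙ G) i j = ⋁ k, F i k * G k j`. -/
def mOdot {m n p : ℕ} (F : Matrix (Fin m) (Fin n) NNReal) (G : Matrix (Fin n) (Fin p) NNReal) :
    Matrix (Fin m) (Fin p) NNReal :=
  Matrix.of fun i j => Finset.univ.sup fun k => F i k * G k j

/-- Entrywise maximum of two matrices. -/
def mSup {m n : ℕ} (A B : Matrix (Fin m) (Fin n) NNReal) : Matrix (Fin m) (Fin n) NNReal :=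
  Matrix.of fun i j => A i j ⊔ B i j

/-- Max-times power: `A^{⊙0} = I`, `A^{⊙(k+1)} = A^{⊙k} ⊙ A`. -/
def mPow {d : ℕ} (A : Matrix (Fin d) (Fin d) NNReal) : ℕ → Matrix (Fin d) (Fin d) NNReal
  | 0 => 1
  | k + 1 => mOdot (mPow A k) A

/-- Kleene star: `B = ⋁_{k=0}^{d-1} C^{⊙k}`. -/
def kleene {d : ℕ} (C : Matrix (Fin d) (Fin d) NNReal) : Matrix (Fin d) (Fin d) NNReal :=
  Matrix.of fun i j => (Finset.range d).sup fun k => mPow C k i j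

/-- `IsWalk C i j l` : `l` is the list of vertices after `i` of a walk from `i` to `j`
    along positive entries of `C`. -/
def IsWalk {d : ℕ} (C : Matrix (Fin d) (Fin d) NNReal) : Fin d → Fin d → List (Fin d) → Prop
  | i, j, [] => i = j
  | i, j, k :: l => 0 < C i k ∧ IsWalk C k j l

/-- Deterministic path weight: product of edge weights along a walk. -/
def walkWeight {d : ℕ} (C : Matrix (Fin d) (Fin d) NNReal) : Fin d → List (Fin d) → NNReal
  | _, [] => 1
  | i, k :: l => C i k * walkWeight C k l

/-- Acyclicity: the only walk from a vertex to itself is the empty one. -/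
def Acyclic {d : ℕ} (C : Matrix (Fin d) (Fin d) NNReal) : Prop :=
  ∀ i l, IsWalk C i i l → l = []

/-- Non-noisy ML coefficient: maximal deterministic path weight from `j` to `i`
    (`1` on the diagonal; `0` if there is no path). -/
def detB {d : ℕ} (C : Matrix (Fin d) (Fin d) NNReal) (j i : Fin d) : NNReal :=
  sSup {w | ∃ l, IsWalk C j i l ∧ w = walkWeight C j l}

/-- Noisy path weight (without the initial noise factor `ε j`):
    `∏_l c_{k_l k_{l+1}} ε_{k_{l+1}}` along a walk. -/
def noisyWeight {d : ℕ} (C : Matrix (Fin d) (Fin d) NNReal) (ε : Fin d → NNReal) :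
    Fin d → List (Fin d) → NNReal
  | _, [] => 1
  | i, k :: l => C i k * ε k * noisyWeight C ε k l

/-- Random (noisy) ML coefficient `b̄_{ji}`: maximal random path weight
    `d̄_{ji}(p) = ε_j ∏ c ε` from `j` to `i`; equals `ε j` on the diagonal,
    `0` if `j` is not an ancestor of `i`. -/
def barB {d : ℕ} (C : Matrix (Fin d) (Fin d) NNReal) (ε : Fin d → NNReal) (j i : Fin d) :
    NNReal :=
  sSup {w | ∃ l, IsWalk C j i l ∧ w = ε j * noisyWeight C ε j l}

/-- `j` is a strict ancestor of `i` (there exists a nonempty path). -/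
def Reach {d : ℕ} (C : Matrix (Fin d) (Fin d) NNReal) (j i : Fin d) : Prop :=
  ∃ l, l ≠ [] ∧ IsWalk C j i l

/-- Max-times product of a row vector with a matrix. -/
def vOdot {d : ℕ} (x : Fin d → NNReal) (A : Matrix (Fin d) (Fin d) NNReal) : Fin d → NNReal :=
  fun j => Finset.univ.sup fun k => x k * A k j

/-- Componentwise maximum of two vectors. -/
def vSup {d : ℕ} (x y : Fin d → NNReal) : Fin d → NNReal := fun i => x i ⊔ y i

/-- Maximum of `f k` over all `k` satisfying `P` (0 if there is none). -/
def supOver {d : ℕ} (P : Fin d → Prop) (f : Fin d → NNReal) : NNReal :=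
  sSup {w | ∃ k, P k ∧ w = f k}

end

section

variable {d : ℕ}

lemma vOdot_sup (x y : Fin d → NNReal) (M : Matrix (Fin d) (Fin d) NNReal) :
    vOdot (x ⊔ y) M = vOdot x M ⊔ vOdot y M := by
  funext j
  simp only [vOdot, Pi.sup_apply, NNReal.sup_mul]
  exact sup_sup

lemma zero_vOdot (M : Matrix (Fin d) (Fin d) NNReal) : vOdot 0 M = 0 := by
  funext j
  simp [vOdot]

lemma vOdot_finset_sup {ι : Type*} (s : Finset ι) (f : ι → Fin d → NNReal)
    (M : Matrix (Fin d) (Fin d) NNReal) :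
    vOdot (s.sup f) M = s.sup fun i => vOdot (f i) M :=
  apply_sup_eq_sup_comp (vOdot · M) (fun x y => vOdot_sup x y M) (zero_vOdot M)

lemma vOdot_zero (x : Fin d → NNReal) : vOdot x 0 = 0 := by
  funext j
  simp [vOdot]

lemma vOdot_one (x : Fin d → NNReal) : vOdot x 1 = x := by
  funext j
  unfold vOdot
  apply le_antisymm
  · refine Finset.sup_le fun k _ => ?_
    rcases eq_or_ne k j with rfl | hkj
    · simp
    · simp [Matrix.one_apply_ne hkj]
  · simpa using Finset.le_sup (f := fun k => x k * (1 : Matrix (Fin d) (Fin d) NNReal) k j)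
      (mem_univ j)

lemma vOdot_vOdot (x : Fin d → NNReal) (A M : Matrix (Fin d) (Fin d) NNReal) :
    vOdot (vOdot x A) M = vOdot x (mOdot A M) := by
  funext j
  simp only [vOdot, mOdot, Matrix.of_apply, NNReal.finset_sup_mul, NNReal.mul_finset_sup,
    mul_assoc]
  exact Finset.sup_comm _ _ _

lemma vOdot_kleene (x : Fin d → NNReal) (C : Matrix (Fin d) (Fin d) NNReal) :
    vOdot x (kleene C) = (range d).sup fun k => vOdot x (mPow C k) := by
  funext j
  simp only [vOdot, kleene, Matrix.of_apply, NNReal.mul_finset_sup, Finset.sup_apply]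
  exact Finset.sup_comm _ _ _

def partialStar (Z : Fin d → NNReal) (C : Matrix (Fin d) (Fin d) NNReal) (n : ℕ) :
    Fin d → NNReal :=
  (range n).sup fun k => vOdot Z (mPow C k)

lemma vSup_vOdot_partialStar (Z : Fin d → NNReal) (C : Matrix (Fin d) (Fin d) NNReal) (n : ℕ) :
    vSup (vOdot (partialStar Z C n) C) Z = partialStar Z C (n + 1) := by
  have hshift : (range (n + 1)).sup (fun k => vOdot Z (mPow C k))
      = vOdot Z (mPow C 0) ⊔ (range n).sup fun k => vOdot Z (mPow C (k + 1)) := by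
    rw [range_add_one', sup_insert, sup_map]
    rfl
  rw [partialStar, partialStar, hshift, vOdot_finset_sup]
  simp only [mPow, vOdot_one, vOdot_vOdot]
  exact sup_comm _ _

lemma partialStar_succ_of_mPow_eq_zero (Z : Fin d → NNReal) {C : Matrix (Fin d) (Fin d) NNReal}
    {n : ℕ} (hC : mPow C n = 0) : partialStar Z C (n + 1) = partialStar Z C n := by
  rw [partialStar, range_add_one, sup_insert, hC, vOdot_zero]
  exact bot_sup_eq _

lemma eq_vSup_vOdot_mPow_partialStar {Z X : Fin d → NNReal} {C : Matrix (Fin d) (Fin d) NNReal}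
    (hX : vSup (vOdot X C) Z = X) (n : ℕ) :
    X = vSup (vOdot X (mPow C n)) (partialStar Z C n) := by
  induction n with
  | zero =>
    funext j
    simp [vSup, partialStar, mPow, vOdot_one]
  | succ n ih =>
    calc X = vSup (vOdot X C) Z := hX.symm
      _ = vSup (vOdot (vSup (vOdot X (mPow C n)) (partialStar Z C n)) C) Z := by rw [← ih]
      _ = vSup (vOdot X (mPow C (n + 1))) (vSup (vOdot (partialStar Z C n) C) Z) := by
        rw [mPow, ← vOdot_vOdot]
        exact (congrArg (vSup · Z) (vOdot_sup _ _ C)).trans (sup_assoc _ _ _)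
      _ = vSup (vOdot X (mPow C (n + 1))) (partialStar Z C (n + 1)) := by
        rw [vSup_vOdot_partialStar]

end

theorem sem_unique_solution_general (d : ℕ) (C : Matrix (Fin d) (Fin d) NNReal)
    (Z : Fin d → NNReal) (hnilp : mPow C d = 0) :
    vSup (vOdot (vOdot Z (kleene C)) C) Z = vOdot Z (kleene C) ∧
    ∀ X : Fin d → NNReal, vSup (vOdot X C) Z = X → X = vOdot Z (kleene C) := by
  rw [vOdot_kleene, ← partialStar]
  refine ⟨by rw [vSup_vOdot_partialStar, partialStar_succ_of_mPow_eq_zero Z hnilp], ?_⟩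
  intro X hX
  rw [eq_vSup_vOdot_mPow_partialStar hX d, hnilp, vOdot_zero]
  exact bot_sup_eq _

/-- `X := Z ⊙ B` is the unique solution of the max-linear SEM
`X = X ⊙ C ∨ Z`, where `B` is the Kleene star of the (nilpotent) edge weight
matrix `C` of a DAG. -/
theorem sem_unique_solution (d : ℕ) (C : Matrix (Fin d) (Fin d) NNReal)
    (Z : Fin d → NNReal) (hZ : ∀ i, 0 < Z i) (hnilp : mPow C d = 0) :
    vSup (vOdot (vOdot Z (kleene C)) C) Z = vOdot Z (kleene C) ∧
    ∀ X : Fin d → NNReal, vSup (vOdot X C) Z = X → X = vOdot Z (kleene C) :=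
  sem_unique_solution_general d C Z hnilp
end

section
/- In the recursive max-linear model with propagating noise, the random max-linear coefficients satisfy the idempotency relation b̄_{ji} = ⋁_{k ∈ V} (b̄_{jk} b̄_{ki} / b̄_{kk}) for all nodes j, i, where b̄_{kk} = ε_k. -/
open Matrix Finset MeasureTheory ProbabilityTheory Filter

/-!
Concatenating a walk `j → k` with a walk `k → i` gives a walk `j → i` whose noisy weight counts
the factor `ε k` twice, so `b̄_{jk} b̄_{ki} ≤ b̄_{ji} ε_k`. Acyclicity makes walks duplicate-free,
hence the sets of walk weights are finite and each `b̄` is attained by a walk (or is `0`); it also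
gives `b̄_{kk} = ε_k`, so the term `k = i` of the supremum is `b̄_{ji}` itself.
-/

section Walks

variable {d : ℕ} {C : Matrix (Fin d) (Fin d) NNReal}

theorem IsWalk.append {l₂ : List (Fin d)} :
    ∀ {l₁ : List (Fin d)} {j k i : Fin d}, IsWalk C j k l₁ → IsWalk C k i l₂ →
      IsWalk C j i (l₁ ++ l₂)
  | [], _, _, _, rfl, h₂ => h₂
  | _ :: _, _, _, _, h₁, h₂ => ⟨h₁.1, h₁.2.append h₂⟩

theorem IsWalk.of_append_cons {x : Fin d} {l₂ : List (Fin d)} :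
    ∀ {l₁ : List (Fin d)} {a b : Fin d}, IsWalk C a b (l₁ ++ x :: l₂) → IsWalk C a x (l₁ ++ [x])
  | [], _, _, h => ⟨h.1, rfl⟩
  | _ :: _, _, _, h => ⟨h.1, of_append_cons h.2⟩

theorem noisyWeight_append (ε : Fin d → NNReal) {l₂ : List (Fin d)} :
    ∀ {l₁ : List (Fin d)} {j k : Fin d}, IsWalk C j k l₁ →
      noisyWeight C ε j (l₁ ++ l₂) = noisyWeight C ε j l₁ * noisyWeight C ε k l₂
  | [], _, _, rfl => by simp [noisyWeight]
  | _ :: _, _, _, h => by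
      simp only [List.cons_append, noisyWeight, noisyWeight_append ε h.2, mul_assoc]

theorem Acyclic.nodup (hC : Acyclic C) :
    ∀ {l : List (Fin d)} {j i : Fin d}, IsWalk C j i l → l.Nodup
  | [], _, _, _ => List.nodup_nil
  | k :: _, _, _, h => by
      refine List.nodup_cons.mpr ⟨fun hk => ?_, hC.nodup h.2⟩
      -- a second visit to `k` would close a cycle at `k`
      obtain ⟨s, t, rfl⟩ := List.append_of_mem hk
      simpa using hC k _ h.2.of_append_cons

end Walks

def noisyWeights {d : ℕ} (C : Matrix (Fin d) (Fin d) NNReal) (ε : Fin d → NNReal) (j i : Fin d) :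
    Set NNReal :=
  {w | ∃ l, IsWalk C j i l ∧ w = ε j * noisyWeight C ε j l}

section NoisyCoefficients

variable {d : ℕ} {C : Matrix (Fin d) (Fin d) NNReal} (ε : Fin d → NNReal)

theorem barB_eq_sSup_noisyWeights (j i : Fin d) :
    barB C ε j i = sSup (noisyWeights C ε j i) := rfl

theorem Acyclic.finite_noisyWeights (hC : Acyclic C) (j i : Fin d) :
    (noisyWeights C ε j i).Finite := by
  refine ((List.finite_length_le (Fin d) d).image fun l => ε j * noisyWeight C ε j l).subset ?_
  rintro _ ⟨l, hl, rfl⟩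
  exact ⟨l, by simpa using (hC.nodup hl).length_le_card, rfl⟩

theorem Acyclic.barB_self (hC : Acyclic C) (k : Fin d) : barB C ε k k = ε k := by
  have : noisyWeights C ε k k = {ε k} := by
    ext w
    constructor
    · rintro ⟨l, hl, rfl⟩
      obtain rfl := hC k l hl
      simp [noisyWeight]
    · rintro rfl
      exact ⟨[], rfl, by simp [noisyWeight]⟩
  rw [barB_eq_sSup_noisyWeights, this, csSup_singleton]

theorem Acyclic.barB_eq_zero_or_exists_walk (hC : Acyclic C) (j i : Fin d) :
    barB C ε j i = 0 ∨ ∃ l, IsWalk C j i l ∧ barB C ε j i = ε j * noisyWeight C ε j l := by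
  rw [barB_eq_sSup_noisyWeights]
  rcases (noisyWeights C ε j i).eq_empty_or_nonempty with h | h
  · exact .inl (by rw [h, csSup_empty]; rfl)
  · exact .inr (h.csSup_mem (hC.finite_noisyWeights ε j i))

theorem Acyclic.barB_mul_barB_le (hC : Acyclic C) (j k i : Fin d) :
    barB C ε j k * barB C ε k i ≤ barB C ε j i * ε k := by
  rcases hC.barB_eq_zero_or_exists_walk ε j k with h₁ | ⟨l₁, hl₁, h₁⟩
  · simp [h₁]
  rcases hC.barB_eq_zero_or_exists_walk ε k i with h₂ | ⟨l₂, hl₂, h₂⟩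
  · simp [h₂]
  have hconcat : ε j * noisyWeight C ε j (l₁ ++ l₂) ≤ barB C ε j i :=
    le_csSup (hC.finite_noisyWeights ε j i).bddAbove ⟨l₁ ++ l₂, hl₁.append hl₂, rfl⟩
  calc barB C ε j k * barB C ε k i = ε j * noisyWeight C ε j (l₁ ++ l₂) * ε k := by
        rw [h₁, h₂, noisyWeight_append ε hl₁]; ring
    _ ≤ barB C ε j i * ε k := by gcongr

end NoisyCoefficients

/-- the random ML coefficients satisfy the idempotency relation
`b̄_{ji} = ⋁_{k ∈ V} b̄_{jk} b̄_{ki} / b̄_{kk}` (with `b̄_{kk} = ε_k`). -/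
theorem barB_idempotency (d : ℕ) (C : Matrix (Fin d) (Fin d) NNReal) (ε : Fin d → NNReal)
    (hacyc : Acyclic C) (hε : ∀ k, 1 ≤ ε k) :
    ∀ j i : Fin d,
      barB C ε j i = Finset.univ.sup fun k => barB C ε j k * barB C ε k i / barB C ε k k := by
  intro j i
  have hε_pos : ∀ k, 0 < ε k := fun k => zero_lt_one.trans_le (hε k)
  refine le_antisymm ?_ (Finset.sup_le fun k _ => ?_)
  · calc barB C ε j i = barB C ε j i * barB C ε i i / barB C ε i i := by
          rw [hacyc.barB_self, mul_div_cancel_right₀ _ (hε_pos i).ne']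
      _ ≤ _ := Finset.le_sup (f := fun k => barB C ε j k * barB C ε k i / barB C ε k k)
          (Finset.mem_univ i)
  · rw [hacyc.barB_self, div_le_iff₀ (hε_pos k)]
    exact hacyc.barB_mul_barB_le ε j k i
end

section
/- Let U be a recursive max-linear vector with propagating noise and suppose j is not an ancestor of i and i ≠ j. Then the ratio U_i/U_j has no positive lower bound: for every c > 0, P(U_i/U_j < c) > 0. -/
open Matrix Finset MeasureTheory ProbabilityTheory Filter

section Aux

variable {d : ℕ} {C : Matrix (Fin d) (Fin d) NNReal}

lemma isWalk_append : ∀ {a b e : Fin d} {l₁ l₂ : List (Fin d)},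
    IsWalk C a b l₁ → IsWalk C b e l₂ → IsWalk C a e (l₁ ++ l₂) := by
  intro a b e l₁
  induction l₁ generalizing a with
  | nil => intro l₂ h1 h2; cases h1; exact h2
  | cons k t ih =>
      intro l₂ h1 h2
      exact ⟨h1.1, ih h1.2 h2⟩

lemma reach_of_transGen {a b : Fin d}
    (h : Relation.TransGen (fun m k : Fin d => 0 < C m k) a b) : Reach C a b := by
  induction h with
  | @single b h => exact ⟨[b], by simp, h, rfl⟩
  | @tail m k h1 h2 ih =>
      obtain ⟨l, hl, hw⟩ := ih
      exact ⟨l ++ [k], by simp, isWalk_append hw ⟨h2, rfl⟩⟩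

lemma acyclic_wf (hacyc : Acyclic C) :
    WellFounded (Relation.TransGen (fun m k : Fin d => 0 < C m k)) := by
  have hirr : IsIrrefl (Fin d) (Relation.TransGen (fun m k : Fin d => 0 < C m k)) := by
    constructor
    intro a ha
    obtain ⟨l, hl, hw⟩ := reach_of_transGen ha
    exact hl (hacyc a l hw)
  exact Finite.wellFounded_of_trans_of_irrefl _

lemma bound_aux (hacyc : Acyclic C)
    {Ω : Type} (Z ε : Fin d → Ω → NNReal) (U : Fin d → Ω → NNReal)
    (hU : ∀ ω i, U i ω = ((Finset.univ.sup fun k => C k i * U k ω) ⊔ Z i ω) * ε i ω)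
    (j : Fin d) (M : NNReal) :
    ∀ k : Fin d, (¬ Reach C j k ∧ k ≠ j) → ∃ B : NNReal,
      ∀ ω, (∀ m, (¬ Reach C j m ∧ m ≠ j) → Z m ω ≤ 1) →
           (∀ m, (¬ Reach C j m ∧ m ≠ j) → ε m ω ≤ M) → U k ω ≤ B := by
  classical
  intro k
  refine (acyclic_wf hacyc).induction
    (C := fun k => (¬ Reach C j k ∧ k ≠ j) → ∃ B : NNReal,
      ∀ ω, (∀ m, (¬ Reach C j m ∧ m ≠ j) → Z m ω ≤ 1) →
           (∀ m, (¬ Reach C j m ∧ m ≠ j) → ε m ω ≤ M) → U k ω ≤ B) k ?_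
  intro k ih hk
  have hPm : ∀ m, 0 < C m k → (¬ Reach C j m ∧ m ≠ j) := by
    intro m hm
    constructor
    · rintro ⟨l, hl, hw⟩
      exact hk.1 ⟨l ++ [k], by simp, isWalk_append hw ⟨hm, rfl⟩⟩
    · rintro rfl
      exact hk.1 ⟨[k], by simp, hm, rfl⟩
  have hBm : ∀ m : Fin d, ∃ B : NNReal, ∀ ω,
      (∀ m', (¬ Reach C j m' ∧ m' ≠ j) → Z m' ω ≤ 1) →
      (∀ m', (¬ Reach C j m' ∧ m' ≠ j) → ε m' ω ≤ M) → 0 < C m k → U m ω ≤ B := by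
    intro m
    by_cases h : 0 < C m k
    · obtain ⟨B, hB⟩ := ih m (Relation.TransGen.single h) (hPm m h)
      exact ⟨B, fun ω h1 h2 _ => hB ω h1 h2⟩
    · exact ⟨0, fun ω _ _ hc => absurd hc h⟩
  choose b hb using hBm
  refine ⟨((Finset.univ.sup fun m => C m k * b m) ⊔ 1) * M, ?_⟩
  intro ω h1 h2
  rw [hU ω k]
  refine mul_le_mul ?_ (h2 k hk) zero_le zero_le
  refine sup_le_sup ?_ (h1 k hk)
  refine Finset.sup_le fun m _ => ?_
  by_cases h : 0 < C m k
  · exact le_trans (mul_le_mul_right (hb m ω h1 h2 h) _)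
      (Finset.le_sup (f := fun m => C m k * b m) (Finset.mem_univ m))
  · have h0 : C m k = 0 := le_antisymm (not_lt.mp h) zero_le
    simp [h0]

end Aux

/-- if `j` is not an ancestor of `i` and `i ≠ j`, the ratio `U_i/U_j`
has no positive lower bound: `P(U_i/U_j < c) > 0` for every `c > 0`. -/
theorem ratio_no_positive_lower_bound (d : ℕ) (C : Matrix (Fin d) (Fin d) NNReal)
    (hacyc : Acyclic C) {Ω : Type} [MeasurableSpace Ω] (μ : Measure Ω)
    [IsProbabilityMeasure μ] (Z ε : Fin d → Ω → NNReal)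
    (hmZ : ∀ k, Measurable (Z k)) (hmε : ∀ k, Measurable (ε k))
    (hindep : iIndepFun
      (Sum.elim Z ε : Fin d ⊕ Fin d → Ω → NNReal) μ)
    (hZatom : ∀ k x, μ {ω | Z k ω = x} = 0)
    (hZsupp : ∀ (k : Fin d) (a b : NNReal), a < b → 0 < μ {ω | a < Z k ω ∧ Z k ω < b})
    (hεone : ∀ k ω, 1 ≤ ε k ω)
    (hεid : ∀ k l, μ.map (ε k) = μ.map (ε l))
    (hεatom : ∀ k x, μ {ω | ε k ω = x} = 0)
    (hεunb : ∀ k M, 0 < μ {ω | M < ε k ω})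
    (U : Fin d → Ω → NNReal)
    (hU : ∀ ω i, U i ω = ((Finset.univ.sup fun k => C k i * U k ω) ⊔ Z i ω) * ε i ω)
    (j i : Fin d) (hnotan : ¬ Reach C j i) (hne : i ≠ j) :
    ∀ c : NNReal, 0 < c → 0 < μ {ω | U i ω / U j ω < c} := by
  classical
  intro c hc
  -- choose M with positive probability of ε below M, for each coordinate
  have hM : ∀ k : Fin d, ∃ M : NNReal, 0 < μ {ω | ε k ω < M} := by
    intro k
    by_contra h
    push_neg at h
    have h0 : ∀ n : ℕ, μ {ω | ε k ω < (n : NNReal)} = 0 :=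
      fun n => le_antisymm (h _) zero_le
    have hnull : μ (⋃ n : ℕ, {ω | ε k ω < (n : NNReal)}) = 0 := measure_iUnion_null h0
    have huniv : (⋃ n : ℕ, {ω | ε k ω < (n : NNReal)}) = Set.univ := by
      ext ω
      simp only [Set.mem_iUnion, Set.mem_univ, iff_true, Set.mem_setOf_eq]
      exact exists_nat_gt (ε k ω)
    rw [huniv, measure_univ] at hnull
    exact one_ne_zero hnull
  choose Mf hMf using hM
  set M : NNReal := Finset.univ.sup Mf with hMdef
  obtain ⟨B, hB⟩ := bound_aux hacyc Z ε U hU j M i ⟨hnotan, hne⟩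
  set L : NNReal := B / c + 1 with hLdef
  have hL1 : (1 : NNReal) ≤ L := le_add_self
  set sets : (Fin d ⊕ Fin d) → Set NNReal := Sum.elim
    (fun m => if m = j then Set.Ioi L else
      if (¬ Reach C j m ∧ m ≠ j) then Set.Iio 1 else Set.univ)
    (fun m => if (¬ Reach C j m ∧ m ≠ j) then Set.Iio M else Set.univ) with hsets
  have hmeas : ∀ s, MeasurableSet (sets s) := by
    rintro (m | m) <;> simp only [hsets, Sum.elim_inl, Sum.elim_inr] <;> split_ifs <;>
      first
        | exact measurableSet_Ioi
        | exact measurableSet_Iio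
        | exact MeasurableSet.univ
  have hprod := hindep.measure_inter_preimage_eq_mul Finset.univ (sets := sets)
    (fun s _ => hmeas s)
  have hApos : 0 < μ (⋂ s ∈ Finset.univ, (Sum.elim Z ε s) ⁻¹' sets s) := by
    rw [hprod, CanonicallyOrderedAdd.prod_pos]
    rintro (m | m) _
    · simp only [hsets, Sum.elim_inl]
      by_cases hmj : m = j
      · subst hmj
        rw [if_pos rfl]
        refine lt_of_lt_of_le (hZsupp m L (L + 1) (lt_add_of_pos_right L one_pos))
          (measure_mono ?_)
        rintro ω ⟨h1, _⟩
        exact h1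
      · rw [if_neg hmj]
        by_cases hPm : (¬ Reach C j m ∧ m ≠ j)
        · rw [if_pos hPm]
          refine lt_of_lt_of_le (hZsupp m 0 1 one_pos) (measure_mono ?_)
          rintro ω ⟨_, h2⟩
          exact h2
        · rw [if_neg hPm]
          simp [measure_univ]
    · simp only [hsets, Sum.elim_inr]
      by_cases hPm : (¬ Reach C j m ∧ m ≠ j)
      · rw [if_pos hPm]
        refine lt_of_lt_of_le (hMf m) (measure_mono ?_)
        intro ω hω
        exact lt_of_lt_of_le hω (Finset.le_sup (f := Mf) (Finset.mem_univ m))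
      · rw [if_neg hPm]
        simp [measure_univ]
  refine lt_of_lt_of_le hApos (measure_mono ?_)
  intro ω hω
  simp only [Finset.mem_coe, Set.mem_iInter] at hω
  have hZj : L < Z j ω := by
    have := hω (Sum.inl j) (Finset.mem_univ _)
    simpa [hsets] using this
  have h1 : ∀ m, (¬ Reach C j m ∧ m ≠ j) → Z m ω ≤ 1 := by
    intro m hm
    have := hω (Sum.inl m) (Finset.mem_univ _)
    rw [hsets] at this
    simp only [Sum.elim_inl, if_neg hm.2, if_pos hm, Set.mem_preimage,
      Set.mem_Iio] at this
    exact this.le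
  have h2 : ∀ m, (¬ Reach C j m ∧ m ≠ j) → ε m ω ≤ M := by
    intro m hm
    have := hω (Sum.inr m) (Finset.mem_univ _)
    rw [hsets] at this
    simp only [Sum.elim_inr, if_pos hm, Set.mem_preimage, Set.mem_Iio] at this
    exact this.le
  have hUi : U i ω ≤ B := hB ω h1 h2
  have hUj : L < U j ω := by
    refine lt_of_lt_of_le hZj ?_
    rw [hU ω j]
    calc Z j ω = Z j ω * 1 := (mul_one _).symm
      _ ≤ ((Finset.univ.sup fun k => C k j * U k ω) ⊔ Z j ω) * ε j ω :=
        mul_le_mul le_sup_right (hεone j ω) zero_le_one zero_le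
  have hUj0 : U j ω ≠ 0 := by
    intro h0
    rw [h0] at hUj
    exact absurd (lt_of_le_of_lt hL1 hUj) (by simp)
  show U i ω / U j ω < c
  rw [div_lt_iff₀ (pos_iff_ne_zero.mpr hUj0)]
  have hcL : c * L = B + c := by
    rw [hLdef, mul_add, mul_one, mul_comm, div_mul_cancel₀ _ (ne_of_gt hc)]
  calc U i ω ≤ B := hUi
    _ < c * L := by rw [hcL]; exact lt_add_of_pos_right B hc
    _ ≤ c * U j ω := mul_le_mul_right hUj.le c
end

section
/- Let X ∈ RV⁰_{α₁} and Y ∈ RV⁰_{α₂} be independent nonnegative random variables regularly varying at zero with positive exponents α₁, α₂. Then X + Y is regularly varying at zero with exponent α₁ + α₂. -/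
open MeasureTheory ProbabilityTheory Filter

noncomputable section

/-- A random variable `X` is regularly varying at zero with exponent `α`:
`lim_{t↓0} P(X ≤ tx)/P(X ≤ t) = x^α` for all `x > 0`. -/
def RegVarZero {Ω : Type*} [MeasurableSpace Ω] (μ : Measure Ω) (X : Ω → ℝ) (α : ℝ) : Prop :=
  ∀ x : ℝ, 0 < x →
    Tendsto (fun t : ℝ => (μ {ω | X ω ≤ t * x}).toReal / (μ {ω | X ω ≤ t}).toReal)
      (nhdsWithin 0 (Set.Ioi 0)) (nhds (x ^ α))

end

/-!
Write `F`, `H`, `G` for the distribution functions of `X`, `Y`, `X + Y`. Regular variation forces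
`F 0 = H 0 = 0`, so `X, Y > 0` a.s.; cutting `(0, t]` into `n` equal cells for `X`, independence
squeezes `G t` between the Riemann–Stieltjes sums `∑ᵢ (F (t(i+1)/n) - F (ti/n)) H (t(n-i-k)/n)`,
`k = 1, 0`. Divided by `F t * H t`, these converge as `t ↓ 0` to the corresponding sums for
`∫₀¹ (1 - u)^α₂ d(u^α₁)`, whose upper and lower versions differ by `o(1)` as `n → ∞`. Hence
`G t / (F t * H t)` has a positive limit, and the exponents add.
-/

open Set Topology

theorem exists_tendsto_of_forall_squeeze {ι : Type*} {l : Filter ι} [l.NeBot] {r : ι → ℝ}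
    (h : ∀ ε > 0, ∃ (lo up : ι → ℝ) (a b : ℝ), Tendsto lo l (𝓝 a) ∧ Tendsto up l (𝓝 b) ∧
      b - a ≤ ε ∧ ∀ᶠ i in l, lo i ≤ r i ∧ r i ≤ up i) :
    ∃ c, Tendsto r l (𝓝 c) := by
  suffices Cauchy (map r l) from CompleteSpace.complete this
  refine Metric.cauchy_iff.2 ⟨map_neBot, fun ε hε => ?_⟩
  obtain ⟨lo, up, a, b, hlo, hup, hab, hr⟩ := h (ε / 4) (by positivity)
  refine ⟨Icc (a - ε / 4) (b + ε / 4), mem_map.2 ?_, fun x hx y hy => ?_⟩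
  · filter_upwards [hr, hlo.eventually_const_lt (by linarith : a - ε / 4 < a),
      hup.eventually_lt_const (by linarith : b < b + ε / 4)] with i hi hloi hupi
    exact ⟨hloi.le.trans hi.1, hi.2.trans hupi.le⟩
  · calc dist x y ≤ b + ε / 4 - (a - ε / 4) := Real.dist_le_of_mem_Icc hx hy
      _ < ε := by linarith

/-- Riemann–Stieltjes sum of `∫₀¹ g (1 - u) df(u)` on the grid `i / n`, with `g` evaluated at
`1 - (i + k) / n`; for monotone `g`, `k = 0` gives an upper and `k = 1` a lower sum. -/
noncomputable def stieltjesSum (f g : ℝ → ℝ) (n : ℕ) (k : ℝ) : ℝ :=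
  ∑ i ∈ Finset.range n, (f ((i + 1) / n) - f (i / n)) * g ((n - k - i) / n)

theorem stieltjesSum_div (f g : ℝ → ℝ) (n : ℕ) (k a b : ℝ) :
    stieltjesSum (fun s => f s / a) (fun s => g s / b) n k = stieltjesSum f g n k / (a * b) := by
  rw [stieltjesSum, stieltjesSum, Finset.sum_div]
  exact Finset.sum_congr rfl fun i _ => by ring

theorem tendsto_stieltjesSum {ι : Type*} {l : Filter ι} {F G : ι → ℝ → ℝ} {f g : ℝ → ℝ}
    (hF : ∀ s, 0 ≤ s → Tendsto (fun i => F i s) l (𝓝 (f s)))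
    (hG : ∀ s, 0 ≤ s → Tendsto (fun i => G i s) l (𝓝 (g s))) (n : ℕ) {k : ℝ} (hk : k ≤ 1) :
    Tendsto (fun i => stieltjesSum (F i) (G i) n k) l (𝓝 (stieltjesSum f g n k)) := by
  refine tendsto_finsetSum _ fun i hi => ?_
  have hin : (i : ℝ) + 1 ≤ n := by exact_mod_cast Finset.mem_range.1 hi
  exact ((hF _ (by positivity)).sub (hF _ (by positivity))).mul
    (hG _ (div_nonneg (by linarith) n.cast_nonneg))

theorem exists_stieltjesSum_sub_le {f g : ℝ → ℝ} (hf : MonotoneOn f (Icc 0 1))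
    (hg : ContinuousOn g (Icc 0 1)) {ε : ℝ} (hε : 0 < ε) :
    ∃ n : ℕ, 0 < n ∧ stieltjesSum f g n 0 - stieltjesSum f g n 1 ≤ (f 1 - f 0) * ε := by
  obtain ⟨δ, hδ, hgδ⟩ := Metric.uniformContinuousOn_iff.1
    (isCompact_Icc.uniformContinuousOn_of_continuous hg) ε hε
  obtain ⟨n, hn⟩ := exists_nat_gt (1 / δ)
  have hn₀ : (0 : ℝ) < n := lt_trans (by positivity) hn
  refine ⟨n, by exact_mod_cast hn₀, ?_⟩
  have hstep : ∀ i ∈ Finset.range n,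
      (f ((i + 1) / n) - f (i / n)) * g ((n - 0 - i) / n)
        - (f ((i + 1) / n) - f (i / n)) * g ((n - 1 - i) / n)
        ≤ (f ((i + 1) / n) - f (i / n)) * ε := by
    intro i hi
    have hin : (i : ℝ) + 1 ≤ n := by exact_mod_cast Finset.mem_range.1 hi
    have mem : ∀ {x : ℝ}, 0 ≤ x → x ≤ n → x / n ∈ Icc (0 : ℝ) 1 := fun h0 h1 =>
      ⟨div_nonneg h0 hn₀.le, div_le_one_of_le₀ h1 hn₀.le⟩
    have hΔ : 0 ≤ f ((i + 1) / n) - f (i / n) :=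
      sub_nonneg.2 <| hf (mem (by positivity) (by linarith)) (mem (by positivity) hin)
        (by gcongr; linarith)
    rw [← mul_sub]
    refine mul_le_mul_of_nonneg_left ?_ hΔ
    have hdist : dist (((n : ℝ) - 0 - i) / n) (((n : ℝ) - 1 - i) / n) < δ := by
      rw [Real.dist_eq, ← sub_div, abs_of_pos (by field_simp; norm_num)]
      calc ((n : ℝ) - 0 - i - (n - 1 - i)) / n = 1 / n := by ring
        _ < δ := (div_lt_iff₀ hn₀).2 (by rwa [div_lt_iff₀ hδ, mul_comm] at hn)
    have := hgδ _ (mem (x := n - 0 - i) (by linarith) (by linarith)) _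
      (mem (x := n - 1 - i) (by linarith) (by linarith)) hdist
    exact le_of_lt (lt_of_abs_lt (by rwa [← Real.dist_eq]))
  have htel : ∑ i ∈ Finset.range n, (f ((i + 1) / n) - f (i / n)) = f 1 - f 0 := by
    have := Finset.sum_range_sub (fun i : ℕ => f (i / n)) n
    push_cast at this
    rwa [div_self hn₀.ne', zero_div] at this
  calc stieltjesSum f g n 0 - stieltjesSum f g n 1
      ≤ ∑ i ∈ Finset.range n, (f ((i + 1) / n) - f (i / n)) * ε := by
        rw [stieltjesSum, stieltjesSum, ← Finset.sum_sub_distrib]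
        exact Finset.sum_le_sum hstep
    _ = (f 1 - f 0) * ε := by rw [← Finset.sum_mul, htel]

def IsRegVarZero (F : ℝ → ℝ) (α : ℝ) : Prop :=
  ∀ x : ℝ, 0 < x → Tendsto (fun t => F (t * x) / F t) (𝓝[>] 0) (𝓝 (x ^ α))

namespace IsRegVarZero

variable {F H G : ℝ → ℝ} {α β : ℝ}

theorem pos (hF : IsRegVarZero F α) (hmono : Monotone F) (hnn : ∀ t, 0 ≤ F t) {t : ℝ}
    (ht : 0 < t) : 0 < F t := by
  by_contra! hFt
  have hzero : (fun s => F (s * 1) / F s) =ᶠ[𝓝[>] 0] fun _ => 0 := by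
    filter_upwards [Ioo_mem_nhdsGT ht] with s hs
    rw [le_antisymm ((hmono hs.2.le).trans hFt) (hnn s), div_zero]
  have := tendsto_nhds_unique (hF 1 one_pos) (tendsto_const_nhds.congr' hzero.symm)
  simp at this

theorem apply_zero (hF : IsRegVarZero F α) (hmono : Monotone F) (hnn : ∀ t, 0 ≤ F t)
    (hle : ∀ t, F t ≤ 1) (hα : 0 < α) : F 0 = 0 := by
  by_contra hF0
  have hpos : 0 < F 0 := (hnn 0).lt_of_ne' hF0
  -- `F (t x) / F t ≤ 1 / F 0` for all `t > 0`, while `x ^ α` is unbounded.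
  obtain ⟨x, hx_large, hx⟩ := (((tendsto_rpow_atTop hα).eventually_gt_atTop (1 / F 0)).and
    (eventually_gt_atTop 0)).exists
  have hbound : ∀ᶠ t in 𝓝[>] 0, F (t * x) / F t ≤ 1 / F 0 := by
    filter_upwards [self_mem_nhdsWithin] with t ht
    exact div_le_div₀ zero_le_one (hle _) hpos (hmono (le_of_lt ht))
  exact (le_of_tendsto (hF x hx) hbound).not_gt hx_large

theorem tendsto_div_of_nonneg (hF : IsRegVarZero F α) (hF0 : F 0 = 0) (hα : α ≠ 0) {x : ℝ}
    (hx : 0 ≤ x) : Tendsto (fun t => F (t * x) / F t) (𝓝[>] 0) (𝓝 (x ^ α)) := by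
  rcases hx.lt_or_eq with hx | rfl
  · exact hF x hx
  · simp [hF0, Real.zero_rpow hα]

theorem of_div_mul_tendsto (hF : IsRegVarZero F α) (hH : IsRegVarZero H β)
    (hFpos : ∀ t, 0 < t → F t ≠ 0) (hHpos : ∀ t, 0 < t → H t ≠ 0) {c : ℝ}
    (hG : Tendsto (fun t => G t / (F t * H t)) (𝓝[>] 0) (𝓝 c)) (hc : c ≠ 0) :
    IsRegVarZero G (α + β) := by
  intro x hx
  have hscale : Tendsto (fun t => t * x) (𝓝[>] 0) (𝓝[>] 0) := by
    refine tendsto_nhdsWithin_iff.2 ⟨?_, ?_⟩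
    · exact ((continuous_mul_const x).tendsto' 0 0 (zero_mul x)).mono_left nhdsWithin_le_nhds
    · filter_upwards [self_mem_nhdsWithin] with t (ht : 0 < t) using mul_pos ht hx
  have hlim := ((hG.comp hscale).div hG hc).mul ((hF x hx).mul (hH x hx))
  rw [div_self hc, one_mul, ← Real.rpow_add hx] at hlim
  refine hlim.congr' ?_
  filter_upwards [self_mem_nhdsWithin] with t (ht : 0 < t)
  have := hFpos t ht
  have := hHpos t ht
  have := hFpos _ (mul_pos ht hx)
  have := hHpos _ (mul_pos ht hx)
  simp only [Pi.div_apply, Function.comp_apply]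
  field_simp

theorem tendsto_stieltjesSum_div (hF : IsRegVarZero F α) (hH : IsRegVarZero H β)
    (hF0 : F 0 = 0) (hH0 : H 0 = 0) (hα : α ≠ 0) (hβ : β ≠ 0) (n : ℕ) {k : ℝ} (hk : k ≤ 1) :
    Tendsto (fun t => stieltjesSum (fun s => F (t * s)) (fun s => H (t * s)) n k / (F t * H t))
      (𝓝[>] 0) (𝓝 (stieltjesSum (· ^ α) (· ^ β) n k)) := by
  simp only [← stieltjesSum_div]
  exact tendsto_stieltjesSum (fun s hs => hF.tendsto_div_of_nonneg hF0 hα hs)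
    (fun s hs => hH.tendsto_div_of_nonneg hH0 hβ hs) n hk

theorem of_stieltjesSum_squeeze (hF : IsRegVarZero F α) (hH : IsRegVarZero H β)
    (hα : 0 < α) (hβ : 0 < β) (hFpos : ∀ t, 0 < t → 0 < F t) (hHpos : ∀ t, 0 < t → 0 < H t)
    (hF0 : F 0 = 0) (hH0 : H 0 = 0)
    (hlower : ∀ n t, 0 < t → stieltjesSum (fun s => F (t * s)) (fun s => H (t * s)) n 1 ≤ G t)
    (hupper : ∀ n, 0 < n → ∀ t, 0 < t →
      G t ≤ stieltjesSum (fun s => F (t * s)) (fun s => H (t * s)) n 0) :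
    IsRegVarZero G (α + β) := by
  have hlim := hF.tendsto_stieltjesSum_div hH hF0 hH0 hα.ne' hβ.ne'
  have hdiv : ∀ {a b t : ℝ}, 0 < t → a ≤ b → a / (F t * H t) ≤ b / (F t * H t) :=
    fun ht hab => div_le_div_of_nonneg_right hab (mul_pos (hFpos _ ht) (hHpos _ ht)).le
  obtain ⟨c, hc⟩ : ∃ c, Tendsto (fun t => G t / (F t * H t)) (𝓝[>] 0) (𝓝 c) := by
    refine exists_tendsto_of_forall_squeeze fun ε hε => ?_
    obtain ⟨n, hn, hdiff⟩ := exists_stieltjesSum_sub_le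
      ((Real.monotoneOn_rpow_Ici_of_exponent_nonneg hα.le).mono Icc_subset_Ici_self)
      (Real.continuous_rpow_const hβ.le).continuousOn hε
    simp only [Real.one_rpow, Real.zero_rpow hα.ne', sub_zero, one_mul] at hdiff
    refine ⟨_, _, _, _, hlim n le_rfl, hlim n zero_le_one, hdiff, ?_⟩
    filter_upwards [self_mem_nhdsWithin] with t (ht : 0 < t)
    exact ⟨hdiv ht (hlower n t ht), hdiv ht (hupper n hn t ht)⟩
  have hc_pos : 0 < c := by
    have hsum_two : stieltjesSum (· ^ α) (· ^ β) 2 1 = (1 / 2) ^ α * (1 / 2) ^ β := by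
      norm_num [stieltjesSum, Finset.sum_range_succ, Real.zero_rpow hα.ne', Real.zero_rpow hβ.ne']
    refine lt_of_lt_of_le (by rw [hsum_two]; positivity)
      (le_of_tendsto_of_tendsto (hlim 2 le_rfl) hc ?_)
    filter_upwards [self_mem_nhdsWithin] with t (ht : 0 < t) using hdiv ht (hlower 2 t ht)
  exact hF.of_div_mul_tendsto hH (fun t ht => (hFpos t ht).ne') (fun t ht => (hHpos t ht).ne')
    hc hc_pos.ne'

end IsRegVarZero

section Distribution

variable {Ω : Type*} [MeasurableSpace Ω] {μ : Measure Ω} {X Y : Ω → ℝ}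

theorem monotone_measureReal_le [IsFiniteMeasure μ] : Monotone fun t => μ.real {ω | X ω ≤ t} :=
  fun _ _ hab => measureReal_mono fun _ h => le_trans h hab

namespace RegVarZero

variable {α : ℝ}

theorem isRegVarZero (hX : RegVarZero μ X α) :
    IsRegVarZero (fun t => μ.real {ω | X ω ≤ t}) α :=
  hX

variable [IsProbabilityMeasure μ]

theorem measureReal_pos (hX : RegVarZero μ X α) {t : ℝ} (ht : 0 < t) :
    0 < μ.real {ω | X ω ≤ t} :=
  hX.isRegVarZero.pos monotone_measureReal_le (fun _ => measureReal_nonneg) ht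

theorem measureReal_le_zero (hX : RegVarZero μ X α) (hα : 0 < α) :
    μ.real {ω | X ω ≤ 0} = 0 :=
  hX.isRegVarZero.apply_zero monotone_measureReal_le (fun _ => measureReal_nonneg)
    (fun _ => measureReal_le_one) hα

theorem ae_pos (hX : RegVarZero μ X α) (hα : 0 < α) : ∀ᵐ ω ∂μ, 0 < X ω := by
  simpa only [ae_iff, not_lt] using
    (measureReal_eq_zero_iff (measure_ne_top μ _)).1 (hX.measureReal_le_zero hα)

end RegVarZero

variable [IsFiniteMeasure μ]

theorem measureReal_Ioc_inter_Iic (hXm : Measurable X) (hXY : IndepFun X Y μ) {a b : ℝ}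
    (hab : a ≤ b) (c : ℝ) :
    μ.real (X ⁻¹' Ioc a b ∩ Y ⁻¹' Iic c) =
      (μ.real {ω | X ω ≤ b} - μ.real {ω | X ω ≤ a}) * μ.real {ω | Y ω ≤ c} := by
  rw [Measure.real, hXY.measure_inter_preimage_eq_mul _ _ measurableSet_Ioc measurableSet_Iic,
    ENNReal.toReal_mul, ← Iic_sdiff_Iic, preimage_sdiff, ← Measure.real,
    measureReal_sdiff (preimage_mono (Iic_subset_Iic.2 hab)) (hXm measurableSet_Iic)]
  rfl

theorem stieltjesSum_measureReal_eq_sum (hXm : Measurable X) (hXY : IndepFun X Y μ) (n : ℕ)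
    (k : ℝ) {t : ℝ} (ht : 0 ≤ t) :
    stieltjesSum (fun s => μ.real {ω | X ω ≤ t * s}) (fun s => μ.real {ω | Y ω ≤ t * s}) n k =
      ∑ i ∈ Finset.range n,
        μ.real (X ⁻¹' Ioc (t * (i / n)) (t * ((i + 1) / n)) ∩ Y ⁻¹' Iic (t * ((n - k - i) / n))) :=
  Finset.sum_congr rfl fun _ _ =>
    (measureReal_Ioc_inter_Iic hXm hXY (by gcongr; linarith) _).symm

theorem stieltjesSum_le_measureReal_add_le (hXm : Measurable X) (hYm : Measurable Y)
    (hXY : IndepFun X Y μ) (n : ℕ) {t : ℝ} (ht : 0 ≤ t) :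
    stieltjesSum (fun s => μ.real {ω | X ω ≤ t * s}) (fun s => μ.real {ω | Y ω ≤ t * s}) n 1 ≤
      μ.real {ω | X ω + Y ω ≤ t} := by
  have hmono : Monotone fun i : ℕ => t * (i / n) := fun i j hij =>
    mul_le_mul_of_nonneg_left (div_le_div_of_nonneg_right (Nat.cast_le.2 hij) n.cast_nonneg) ht
  have hdisj := hmono.pairwise_disjoint_on_Ioc_succ
  simp only [Order.succ_eq_add_one, Nat.cast_add, Nat.cast_one] at hdisj
  rw [stieltjesSum_measureReal_eq_sum hXm hXY n 1 ht, ← measureReal_biUnion_finset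
    (fun i _ j _ hij => ((hdisj hij).preimage X).mono inter_subset_left inter_subset_left)
    (fun i _ => (hXm measurableSet_Ioc).inter (hYm measurableSet_Iic))]
  refine measureReal_mono (iUnion₂_subset fun i hi ω ⟨hXω, hYω⟩ => ?_)
  have hn : (n : ℝ) ≠ 0 := Nat.cast_ne_zero.2 (Nat.ne_zero_of_lt (Finset.mem_range.1 hi))
  have hsplit : t * ((i + 1) / n) + t * ((n - 1 - i) / n) = t := by field_simp; ring
  exact (add_le_add hXω.2 hYω).trans hsplit.le

theorem measureReal_add_le_le_stieltjesSum (hXm : Measurable X) (hXY : IndepFun X Y μ)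
    (hX : ∀ᵐ ω ∂μ, 0 < X ω) (hY : ∀ᵐ ω ∂μ, 0 ≤ Y ω) {n : ℕ} (hn : 0 < n) {t : ℝ} (ht : 0 ≤ t) :
    μ.real {ω | X ω + Y ω ≤ t} ≤
      stieltjesSum (fun s => μ.real {ω | X ω ≤ t * s}) (fun s => μ.real {ω | Y ω ≤ t * s}) n 0 := by
  rw [stieltjesSum_measureReal_eq_sum hXm hXY n 0 ht]
  refine (ENNReal.toReal_mono (measure_ne_top μ _) (measure_mono_ae ?_)).trans
    (measureReal_biUnion_finset_le _ _)
  filter_upwards [hX, hY] with ω hXω hYω (hω : X ω + Y ω ≤ t)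
  have hn' : (n : ℝ) ≠ 0 := by positivity
  have hXω' : X ω ∈ Ioc (t * ((0 : ℕ) / n)) (t * ((n : ℕ) / n)) := by
    rw [Nat.cast_zero, zero_div, mul_zero, div_self hn', mul_one]
    exact ⟨hXω, by linarith⟩
  obtain ⟨i, hi, hXi⟩ :=
    mem_iUnion₂.1 (Ioc_subset_biUnion_Ioc n (fun i : ℕ => t * (i / n)) hXω')
  push_cast at hXi
  have hsplit : t * ((n - 0 - i) / n) = t - t * (i / n) := by field_simp; ring
  exact mem_iUnion₂.2 ⟨i, hi, hXi, show Y ω ≤ _ by rw [hsplit]; linarith [hXi.1]⟩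

end Distribution

theorem regVarZero_add_general {Ω : Type*} [MeasurableSpace Ω] (μ : Measure Ω)
    [IsProbabilityMeasure μ] (X Y : Ω → ℝ)
    (hXm : Measurable X) (hYm : Measurable Y)
    (hindep : IndepFun X Y μ) (α₁ α₂ : ℝ) (hα₁ : 0 < α₁) (hα₂ : 0 < α₂)
    (hX : RegVarZero μ X α₁) (hY : RegVarZero μ Y α₂) :
    RegVarZero μ (fun ω => X ω + Y ω) (α₁ + α₂) := by
  show IsRegVarZero (fun t => μ.real {ω | X ω + Y ω ≤ t}) (α₁ + α₂)
  exact hX.isRegVarZero.of_stieltjesSum_squeeze hY.isRegVarZero hα₁ hα₂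
    (fun _ => hX.measureReal_pos) (fun _ => hY.measureReal_pos)
    (hX.measureReal_le_zero hα₁) (hY.measureReal_le_zero hα₂)
    (fun n _ ht => stieltjesSum_le_measureReal_add_le hXm hYm hindep n ht.le)
    (fun _ hn _ ht => measureReal_add_le_le_stieltjesSum hXm hindep (hX.ae_pos hα₁)
      ((hY.ae_pos hα₂).mono fun _ h => h.le) hn ht.le)

/-- if `X ∈ RV⁰_{α₁}` and `Y ∈ RV⁰_{α₂}` are independent nonnegative
random variables with `α₁, α₂ > 0`, then `X + Y ∈ RV⁰_{α₁+α₂}`. -/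
theorem regVarZero_add {Ω : Type*} [MeasurableSpace Ω] (μ : Measure Ω)
    [IsProbabilityMeasure μ] (X Y : Ω → ℝ)
    (hXm : Measurable X) (hYm : Measurable Y)
    (hX0 : ∀ ω, 0 ≤ X ω) (hY0 : ∀ ω, 0 ≤ Y ω)
    (hindep : IndepFun X Y μ) (α₁ α₂ : ℝ) (hα₁ : 0 < α₁) (hα₂ : 0 < α₂)
    (hX : RegVarZero μ X α₁) (hY : RegVarZero μ Y α₂) :
    RegVarZero μ (fun ω => X ω + Y ω) (α₁ + α₂) :=
  regVarZero_add_general μ X Y hXm hYm hindep α₁ α₂ hα₁ hα₂ hX hY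
end
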